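/- In the byte-granularity model, applying a list of partial-write records to the disk page, where the disk page equals the result of applying an earlier prefix of the same record sequence to an initial page, yields the same final page as applying the entire record sequence to the initial page; i.e., replaying records that were already incorporated into the disk snapshot is idempotent with respect to the final page contents. -/

import Mathlib

/- Byte-granularity model: a page is a function from offsets to bytes; a
   record is a partial overwrite (off, len, data) within the page. -/

/-- A page of `n` bytes. -/
abbrev Page (n : ℕ) := Fin n → UInt8

/-- A partial-write record: bytes `[off, off+len)` get `data 0, …, data (len-1)`. -/
structure Rec (n : ℕ) where
  off  : ℕ
  len  : ℕ
  data : ℕ → UInt8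
  wf   : off + len ≤ n

/-- `r` covers offset `i`. -/
def covers {n : ℕ} (r : Rec n) (i : Fin n) : Prop :=
  r.off ≤ i.val ∧ i.val < r.off + r.len

/-- Apply one partial-write record to a page. -/
def applyRec {n : ℕ} (r : Rec n) (p : Page n) : Page n := fun i =>
  if r.off ≤ i.val ∧ i.val < r.off + r.len then r.data (i.val - r.off) else p i

/-- Apply a list of records in order (sequential overwrite application). -/
def applyRecs {n : ℕ} (rs : List (Rec n)) (p : Page n) : Page n :=
  rs.foldl (fun p r => applyRec r p) p

/- Off the bytes covered by `rs`, the page `applyRecs rs p` agrees with `p`, and `applyRecs rs`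
reads its input page only there. Hence replaying `rs` on `applyRecs rs p` gives the same result
as on `p`. -/

section applyRecs

variable {n : ℕ}

@[simp]
theorem applyRecs_nil (p : Page n) : applyRecs [] p = p := rfl

@[simp]
theorem applyRecs_cons (r : Rec n) (rs : List (Rec n)) (p : Page n) :
    applyRecs (r :: rs) p = applyRecs rs (applyRec r p) := rfl

theorem applyRecs_append (rs₁ rs₂ : List (Rec n)) (p : Page n) :
    applyRecs (rs₁ ++ rs₂) p = applyRecs rs₂ (applyRecs rs₁ p) :=
  List.foldl_append

theorem applyRec_of_not_covers {r : Rec n} {i : Fin n} (h : ¬ covers r i) (p : Page n) :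
    applyRec r p i = p i :=
  if_neg h

theorem applyRec_of_covers {r : Rec n} {i : Fin n} (h : covers r i) (p q : Page n) :
    applyRec r p i = applyRec r q i := by
  simp only [applyRec, if_pos (show r.off ≤ i.val ∧ i.val < r.off + r.len from h)]

theorem applyRecs_of_forall_not_covers {rs : List (Rec n)} {i : Fin n}
    (h : ∀ r ∈ rs, ¬ covers r i) (p : Page n) : applyRecs rs p i = p i := by
  induction rs generalizing p with
  | nil => rfl
  | cons r rs ih =>
    rw [applyRecs_cons, ih (fun r' hr' => h r' (List.mem_cons_of_mem r hr')),
      applyRec_of_not_covers (h r List.mem_cons_self)]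

theorem applyRecs_congr {rs : List (Rec n)} {p q : Page n}
    (h : ∀ i, (∀ r ∈ rs, ¬ covers r i) → p i = q i) : applyRecs rs p = applyRecs rs q := by
  induction rs generalizing p q with
  | nil => funext i; exact h i (by simp)
  | cons r rs ih =>
    rw [applyRecs_cons, applyRecs_cons]
    refine ih fun i hrs => ?_
    by_cases hr : covers r i
    · exact applyRec_of_covers hr p q
    · rw [applyRec_of_not_covers hr, applyRec_of_not_covers hr]
      exact h i (List.forall_mem_cons.2 ⟨hr, hrs⟩)

theorem applyRecs_applyRecs_self (rs : List (Rec n)) (p : Page n) :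
    applyRecs rs (applyRecs rs p) = applyRecs rs p :=
  applyRecs_congr fun _ h => applyRecs_of_forall_not_covers h p

end applyRecs

/-- Applying a suffix of records to a disk snapshot obtained
    by applying the prefix equals applying the entire sequence to the initial
    page; moreover replaying records already incorporated in the snapshot is
    idempotent: `apply rs (apply rs p) = apply rs p`. -/
theorem replay_prefix_and_idempotence :
    (∀ (n : ℕ) (p₀ : Page n) (rs₁ rs₂ : List (Rec n)),
      applyRecs rs₂ (applyRecs rs₁ p₀) = applyRecs (rs₁ ++ rs₂) p₀) ∧
    (∀ (n : ℕ) (rs : List (Rec n)) (p : Page n),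
      applyRecs rs (applyRecs rs p) = applyRecs rs p) :=
  ⟨fun _ p₀ rs₁ rs₂ => (applyRecs_append rs₁ rs₂ p₀).symm, fun _ => applyRecs_applyRecs_self⟩
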